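/- Let Q* be a dyadic cube and let the stopping cubes F_{Q*}^{j+1} inside a cube F ∈ F_{Q*}^j be the maximal dyadic subcubes Q of F for which |⟨b_F⟩_Q| < 1/2 or ⟨|b_F|^p⟩_Q > 2^{p'+1} A^{p'}, where ⟨b_F⟩_F = 1 and ‖b_F‖_{L^p(μ)}^p ≤ A μ(F). Then ∑_{S ∈ F_{Q*}^{j+1}, S ⊂ F} μ(S) ≤ c μ(F) for some constant c < 1 depending only on p and A. -/

import Mathlib

/-!
Split the stopping cubes into those with `|⟨b⟩_Q| < 1/2` (union `U₁`) and those with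
`⟨|b|^p⟩_Q > Λ` (union `U₂`). Summing over the disjoint cubes gives `∫_{U₁} b ≤ μ(U₁)/2`, so
`∫_{F∖U₁} b ≥ μ(F)/2`; Jensen's inequality for `t ↦ t^p` and `∫_F |b|^p ≤ A μ(F)` then force
`μ(F∖U₁) ≥ μ(F)/(2K)` with `K = (2A)^{1/(p-1)}`. Chebyshev gives `μ(U₂) ≤ A μ(F)/Λ`, and the
threshold `Λ = 2^{p'+1} A^{p'} = 4AK` makes this `μ(F)/(4K)`. Maximal dyadic cubes are pairwise
disjoint, so the stopping cubes cover at most `(1 - 1/(4K)) μ(F)`.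
-/

open MeasureTheory Set Function
open scoped ENNReal

noncomputable section

def dyadicCube (n : ℕ) (k : ℤ) (c : Fin n → ℤ) : Set (Fin n → ℝ) :=
  {x | ∀ i, (c i : ℝ) * 2 ^ k ≤ x i ∧ x i < ((c i : ℝ) + 1) * 2 ^ k}

section Dyadic

variable {n : ℕ} {k k' : ℤ} {c c' : Fin n → ℤ}

lemma dyadicCube_eq_pi (n : ℕ) (k : ℤ) (c : Fin n → ℤ) :
    dyadicCube n k c = univ.pi fun i => Ico ((c i : ℝ) * 2 ^ k) ((c i + 1) * 2 ^ k) := by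
  ext x
  simp [dyadicCube]

lemma dyadicCube_nonempty (n : ℕ) (k : ℤ) (c : Fin n → ℤ) : (dyadicCube n k c).Nonempty :=
  ⟨fun i => c i * 2 ^ k,
    fun _ => ⟨le_rfl, mul_lt_mul_of_pos_right (lt_add_one _) (zpow_pos two_pos k)⟩⟩

lemma measurableSet_dyadicCube (n : ℕ) (k : ℤ) (c : Fin n → ℤ) :
    MeasurableSet (dyadicCube n k c) := by
  rw [dyadicCube_eq_pi]
  exact .univ_pi fun _ => measurableSet_Ico

lemma mem_dyadicCube_iff {x : Fin n → ℝ} :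
    x ∈ dyadicCube n k c ↔ ∀ i, ⌊x i / 2 ^ k⌋ = c i := by
  have h2k : (0 : ℝ) < 2 ^ k := zpow_pos two_pos k
  simp only [dyadicCube, mem_ofPred_eq, Int.floor_eq_iff, le_div_iff₀ h2k, div_lt_iff₀ h2k]

lemma floor_div_two_zpow_add_natCast (r : ℝ) (k : ℤ) (d : ℕ) :
    ⌊r / 2 ^ (k + d)⌋ = ⌊r / 2 ^ k⌋ / 2 ^ d := by
  rw [zpow_add₀ two_ne_zero, zpow_natCast, ← div_div]
  exact_mod_cast Int.floor_div_natCast (r / 2 ^ k) (2 ^ d)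

lemma dyadicCube_subset_of_le (hk : k ≤ k')
    (h : (dyadicCube n k c ∩ dyadicCube n k' c').Nonempty) :
    dyadicCube n k c ⊆ dyadicCube n k' c' := by
  obtain ⟨x, hx, hx'⟩ := h
  obtain ⟨d, rfl⟩ : ∃ d : ℕ, k' = k + d := ⟨(k' - k).toNat, by omega⟩
  intro y hy
  rw [mem_dyadicCube_iff] at hx hx' hy ⊢
  intro i
  rw [← hx' i, floor_div_two_zpow_add_natCast, floor_div_two_zpow_add_natCast, hy i, hx i]

lemma dyadicCube_subset_or_subset (h : ¬Disjoint (dyadicCube n k c) (dyadicCube n k' c')) :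
    dyadicCube n k c ⊆ dyadicCube n k' c' ∨ dyadicCube n k' c' ⊆ dyadicCube n k c := by
  rw [not_disjoint_iff_nonempty_inter] at h
  rcases le_total k k' with hk | hk
  · exact .inl (dyadicCube_subset_of_le hk h)
  · exact .inr (dyadicCube_subset_of_le hk (inter_comm _ _ ▸ h))

lemma dyadicCube_injective (hn : n ≠ 0) (h : dyadicCube n k c = dyadicCube n k' c') :
    k = k' ∧ c = c' := by
  have hI : ∀ i, (c i : ℝ) * 2 ^ k = c' i * 2 ^ k' ∧
      ((c i : ℝ) + 1) * 2 ^ k = (c' i + 1) * 2 ^ k' := by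
    intro i
    have := congrArg (image fun x : Fin n → ℝ => x i) h
    rw [dyadicCube_eq_pi, dyadicCube_eq_pi,
      eval_image_univ_pi (dyadicCube_eq_pi n k c ▸ dyadicCube_nonempty n k c),
      eval_image_univ_pi (dyadicCube_eq_pi n k' c' ▸ dyadicCube_nonempty n k' c')] at this
    exact (Ico_eq_Ico_iff (.inl (by gcongr; linarith))).1 this
  obtain ⟨i⟩ : Nonempty (Fin n) := Fin.pos_iff_nonempty.1 (Nat.pos_of_ne_zero hn)
  have hk : (2 : ℝ) ^ k = 2 ^ k' := by linarith [hI i]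
  obtain rfl : k = k' := zpow_right_injective₀ two_pos (by norm_num) hk
  exact ⟨rfl, funext fun i => by
    exact_mod_cast mul_right_cancel₀ (zpow_pos two_pos k).ne' (hI i).1⟩

lemma pairwise_disjoint_dyadicCube (hn : n ≠ 0) {S : Set (ℤ × (Fin n → ℤ))}
    (hS : ∀ q ∈ S, ∀ q' ∈ S, ¬dyadicCube n q.1 q.2 ⊂ dyadicCube n q'.1 q'.2) :
    Pairwise (Disjoint on fun q : S => dyadicCube n q.1.1 q.1.2) := by
  have heq : ∀ q q' : S, dyadicCube n q.1.1 q.1.2 ⊆ dyadicCube n q'.1.1 q'.1.2 → q = q' := by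
    intro q q' hsub
    obtain heq | hss := hsub.eq_or_ssubset
    · obtain ⟨hk, hc⟩ := dyadicCube_injective hn heq
      exact Subtype.ext (Prod.ext hk hc)
    · exact absurd hss (hS q q.2 q' q'.2)
  intro q q' hne
  by_contra h
  exact hne ((dyadicCube_subset_or_subset h).elim (heq q q') fun h' => (heq q' q h').symm)

end Dyadic

lemma Real.le_rpow_inv_sub_one_of_rpow_le_mul {a b p : ℝ} (hp : 1 < p) (ha : 0 < a)
    (h : a ^ p ≤ b * a) : a ≤ b ^ (p - 1)⁻¹ := by
  have hb : a ^ (p - 1) ≤ b := by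
    rwa [Real.rpow_sub_one ha.ne', div_le_iff₀ ha]
  calc a = (a ^ (p - 1)) ^ (p - 1)⁻¹ := (Real.rpow_rpow_inv ha.le (by linarith)).symm
    _ ≤ b ^ (p - 1)⁻¹ := by gcongr

lemma Real.two_rpow_mul_rpow_conjExponent {p A : ℝ} (hp : 1 < p) (hA : 0 < A) :
    2 ^ (p / (p - 1) + 1) * A ^ (p / (p - 1)) = 4 * A * (2 * A) ^ (p - 1)⁻¹ := by
  have hp' : p / (p - 1) = 1 + (p - 1)⁻¹ := by
    field_simp [(sub_pos.2 hp).ne']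
    ring
  rw [hp', Real.rpow_add two_pos, Real.rpow_add two_pos, Real.rpow_add hA,
    Real.mul_rpow zero_le_two hA.le]
  norm_num
  ring

namespace MeasureTheory

variable {α ι : Type*} [MeasurableSpace α] {μ : Measure α}

lemma hasSum_measureReal_iUnion [Countable ι] {s : ι → Set α} (hs : ∀ i, MeasurableSet (s i))
    (hd : Pairwise (Disjoint on s)) (hfin : μ (⋃ i, s i) ≠ ∞) :
    HasSum (fun i => μ.real (s i)) (μ.real (⋃ i, s i)) := by
  rw [measure_iUnion hd hs] at hfin
  simpa only [measureReal_def, measure_iUnion hd hs, ENNReal.tsum_toReal_eq fun i =>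
    ne_top_of_le_ne_top hfin (ENNReal.le_tsum i)] using ENNReal.hasSum_toReal hfin

lemma setIntegral_le_mul_measureReal {s : Set α} {f : α → ℝ} {c : ℝ} (hs : μ s ≠ ∞)
    (h : ⨍ x in s, f x ∂μ ≤ c) : ∫ x in s, f x ∂μ ≤ c * μ.real s := by
  rw [← measure_smul_setAverage f hs, smul_eq_mul, mul_comm]
  gcongr

lemma mul_measureReal_le_setIntegral {s : Set α} {f : α → ℝ} {c : ℝ} (hs : μ s ≠ ∞)
    (h : c ≤ ⨍ x in s, f x ∂μ) : c * μ.real s ≤ ∫ x in s, f x ∂μ := by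
  rw [← measure_smul_setAverage f hs, smul_eq_mul, mul_comm]
  gcongr

lemma le_mul_measureReal_of_half_le_setIntegral {s : Set α} {f : α → ℝ} {p A M : ℝ}
    (hp : 1 < p) (hA : 0 ≤ A) (hM : 0 ≤ M) (hs : μ s ≠ ∞) (hf : IntegrableOn f s μ)
    (hfp : IntegrableOn (fun x => |f x| ^ p) s μ) (hf_int : M / 2 ≤ ∫ x in s, f x ∂μ)
    (hfp_int : ∫ x in s, |f x| ^ p ∂μ ≤ A * M) :
    M ≤ 2 * (2 * A) ^ (p - 1)⁻¹ * μ.real s := by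
  obtain rfl | hM := hM.eq_or_lt
  · positivity
  have hs0 : μ s ≠ 0 := fun h => by
    rw [Measure.restrict_eq_zero.2 h, integral_zero_measure] at hf_int
    linarith
  have ht : 0 < μ.real s := ENNReal.toReal_pos hs0 hs
  have ha : M / (2 * μ.real s) ≤ ⨍ x in s, |f x| ∂μ := by
    rw [← div_div, setAverage_eq, smul_eq_mul, inv_mul_eq_div]
    gcongr
    exact hf_int.trans (integral_mono hf hf.abs fun x => le_abs_self _)
  have hjensen : (⨍ x in s, |f x| ∂μ) ^ p ≤ ⨍ x in s, |f x| ^ p ∂μ :=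
    (convexOn_rpow hp.le).map_set_average_le (Real.continuous_rpow_const (by linarith)).continuousOn
      isClosed_Ici hs0 hs (ae_of_all _ fun x => abs_nonneg (f x)) hf.abs hfp
  have hap : (⨍ x in s, |f x| ∂μ) ^ p ≤ 2 * A * ⨍ x in s, |f x| ∂μ := calc
    _ ≤ ⨍ x in s, |f x| ^ p ∂μ := hjensen
    _ ≤ A * M / μ.real s := by
      rw [setAverage_eq, smul_eq_mul, inv_mul_eq_div]
      gcongr
    _ = 2 * A * (M / (2 * μ.real s)) := by field_simp
    _ ≤ 2 * A * ⨍ x in s, |f x| ∂μ := by gcongr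
  have := ha.trans (Real.le_rpow_inv_sub_one_of_rpow_le_mul hp
    (lt_of_lt_of_le (by positivity) ha) hap)
  rwa [div_le_iff₀ (by positivity), ← mul_assoc, mul_comm _ 2] at this

/-- The function `b_F` of a stopping family: `⟨b⟩_F = 1` and `‖b‖_{L^p(F)}^p ≤ A μ(F)`. -/
structure IsNormalizedTestFunction (μ : Measure α) (p A : ℝ) (b : α → ℝ) (F : Set α) :
    Prop where
  measure_ne_top : μ F ≠ ∞
  integrableOn : IntegrableOn b F μ
  integrableOn_rpow : IntegrableOn (fun x => |b x| ^ p) F μ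
  setAverage_eq_one : ⨍ x in F, b x ∂μ = 1
  setIntegral_rpow_le : ∫ x in F, |b x| ^ p ∂μ ≤ A * μ.real F

def IsStoppingSet (μ : Measure α) (b : α → ℝ) (p Λ : ℝ) (Q : Set α) : Prop :=
  |⨍ x in Q, b x ∂μ| < 1 / 2 ∨ Λ < ⨍ x in Q, |b x| ^ p ∂μ

lemma isStoppingSet_iff {b : α → ℝ} {p Λ : ℝ} {Q : Set α} :
    IsStoppingSet μ b p Λ Q ↔ |(μ Q).toReal⁻¹ * ∫ x in Q, b x ∂μ| < 1 / 2 ∨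
      (μ Q).toReal⁻¹ * ∫ x in Q, |b x| ^ p ∂μ > Λ := by
  simp only [IsStoppingSet, setAverage_eq, smul_eq_mul, measureReal_def, gt_iff_lt]

namespace IsNormalizedTestFunction

variable {p A Λ : ℝ} {b : α → ℝ} {F : Set α}

lemma measureReal_le_of_setIntegral_le_half (hb : IsNormalizedTestFunction μ p A b F)
    (hp : 1 < p) (hA : 0 < A) {U : Set α} (hU : MeasurableSet U) (hUF : U ⊆ F)
    (hbU : ∫ x in U, b x ∂μ ≤ 1 / 2 * μ.real U) :
    μ.real U ≤ (1 - (2 * (2 * A) ^ (p - 1)⁻¹)⁻¹) * μ.real F := by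
  have hF_int : ∫ x in F, b x ∂μ = μ.real F := by
    rw [← measure_smul_setAverage b hb.measure_ne_top, hb.setAverage_eq_one, smul_eq_mul,
      mul_one]
  have hUF' : μ.real U ≤ μ.real F := measureReal_mono hUF hb.measure_ne_top
  have hcompl := le_mul_measureReal_of_half_le_setIntegral hp hA.le measureReal_nonneg
    (measure_ne_top_of_subset sdiff_subset hb.measure_ne_top)
    (hb.integrableOn.mono_set sdiff_subset) (hb.integrableOn_rpow.mono_set sdiff_subset)
    (by rw [setIntegral_sdiff hU hb.integrableOn hUF, hF_int]; linarith)
    ((setIntegral_mono_set hb.integrableOn_rpow (ae_of_all _ fun x => by positivity)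
      sdiff_subset.eventuallyLE).trans hb.setIntegral_rpow_le)
  rw [measureReal_sdiff hUF hU hb.measure_ne_top] at hcompl
  have hK : 0 < 2 * (2 * A) ^ (p - 1)⁻¹ := by positivity
  rw [sub_mul, one_mul, le_sub_iff_add_le', ← le_sub_iff_add_le, inv_mul_le_iff₀ hK]
  exact hcompl

lemma measureReal_le_of_mul_le_setIntegral (hb : IsNormalizedTestFunction μ p A b F)
    (hΛ : 0 < Λ) {U : Set α} (hUF : U ⊆ F)
    (hbU : Λ * μ.real U ≤ ∫ x in U, |b x| ^ p ∂μ) :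
    μ.real U ≤ A / Λ * μ.real F := by
  rw [div_mul_eq_mul_div, le_div_iff₀ hΛ, mul_comm]
  exact hbU.trans ((setIntegral_mono_set hb.integrableOn_rpow
    (ae_of_all _ fun x => by positivity) hUF.eventuallyLE).trans hb.setIntegral_rpow_le)

theorem measureReal_iUnion_le_of_isStoppingSet [Countable ι]
    (hb : IsNormalizedTestFunction μ p A b F) (hp : 1 < p) (hA : 0 < A) (hΛ : 0 < Λ)
    {Q : ι → Set α} (hQm : ∀ i, MeasurableSet (Q i)) (hQF : ∀ i, Q i ⊆ F)
    (hQd : Pairwise (Disjoint on Q)) (hQ : ∀ i, IsStoppingSet μ b p Λ (Q i)) :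
    μ.real (⋃ i, Q i) ≤ (1 - (2 * (2 * A) ^ (p - 1)⁻¹)⁻¹ + A / Λ) * μ.real F := by
  set I := {i | |⨍ x in Q i, b x ∂μ| < 1 / 2}
  have hfin : ∀ s ⊆ F, μ s ≠ ∞ := fun s hs => measure_ne_top_of_subset hs hb.measure_ne_top
  have hsub (J : Set ι) : ⋃ i : J, Q i ⊆ F := iUnion_subset fun i => hQF i
  have hdisj (J : Set ι) : Pairwise (Disjoint on fun i : J => Q i) :=
    hQd.comp_of_injective Subtype.val_injective
  have hsum (J : Set ι) : HasSum (fun i : J => μ.real (Q i)) (μ.real (⋃ i : J, Q i)) :=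
    hasSum_measureReal_iUnion (fun i => hQm i) (hdisj J) (hfin _ (hsub J))
  have hint {f : α → ℝ} (J : Set ι) (hf : IntegrableOn f F μ) :
      HasSum (fun i : J => ∫ x in Q i, f x ∂μ) (∫ x in ⋃ i : J, Q i, f x ∂μ) :=
    hasSum_integral_iUnion (fun i => hQm i) (hdisj J) (hf.mono_set (hsub J))
  have hsmall := hb.measureReal_le_of_setIntegral_le_half hp hA (.iUnion fun i : I => hQm i)
    (hsub I) <| hasSum_le (fun i : I => setIntegral_le_mul_measureReal (hfin _ (hQF i))
      (abs_lt.1 i.2).2.le) (hint I hb.integrableOn) ((hsum I).mul_left _)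
  have hlarge := hb.measureReal_le_of_mul_le_setIntegral hΛ (hsub Iᶜ) <|
    hasSum_le (fun i : ↥Iᶜ => mul_measureReal_le_setIntegral (hfin _ (hQF i))
      ((hQ i).resolve_left i.2).le) ((hsum _).mul_left _) (hint _ hb.integrableOn_rpow)
  have hcover : ⋃ i, Q i ⊆ (⋃ i : I, Q i) ∪ ⋃ i : ↥Iᶜ, Q i := by
    refine iUnion_subset fun i => ?_
    by_cases hi : i ∈ I
    · exact subset_union_of_subset_left (subset_iUnion (fun j : I => Q j) ⟨i, hi⟩) _
    · exact subset_union_of_subset_right (subset_iUnion (fun j : ↥Iᶜ => Q j) ⟨i, hi⟩) _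
  calc μ.real (⋃ i, Q i) ≤ μ.real ((⋃ i : I, Q i) ∪ ⋃ i : ↥Iᶜ, Q i) :=
        measureReal_mono hcover (hfin _ (union_subset (hsub _) (hsub _)))
    _ ≤ μ.real (⋃ i : I, Q i) + μ.real (⋃ i : ↥Iᶜ, Q i) := measureReal_union_le _ _
    _ ≤ _ := by linarith

theorem measure_iUnion_le_of_isStoppingSet [Countable ι]
    (hb : IsNormalizedTestFunction μ p A b F) (hp : 1 < p) (hA : 0 < A) (hΛ : 0 < Λ)
    {Q : ι → Set α} (hQm : ∀ i, MeasurableSet (Q i)) (hQF : ∀ i, Q i ⊆ F)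
    (hQd : Pairwise (Disjoint on Q)) (hQ : ∀ i, IsStoppingSet μ b p Λ (Q i)) :
    μ (⋃ i, Q i) ≤ ENNReal.ofReal (1 - (2 * (2 * A) ^ (p - 1)⁻¹)⁻¹ + A / Λ) * μ F := by
  rw [← ofReal_measureReal (measure_ne_top_of_subset (iUnion_subset hQF) hb.measure_ne_top),
    ← ofReal_measureReal hb.measure_ne_top, ← ENNReal.ofReal_mul' measureReal_nonneg]
  exact ENNReal.ofReal_le_ofReal
    (hb.measureReal_iUnion_le_of_isStoppingSet hp hA hΛ hQm hQF hQd hQ)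

lemma not_isStoppingSet (hb : IsNormalizedTestFunction μ p A b F) (hp : 1 < p) (hA : 0 < A)
    (hΛ : 0 < Λ) (hΛ' : A / Λ < (2 * (2 * A) ^ (p - 1)⁻¹)⁻¹) (hFm : MeasurableSet F)
    (hF0 : μ F ≠ 0) : ¬IsStoppingSet μ b p Λ F := fun hF => by
  have := hb.measureReal_iUnion_le_of_isStoppingSet hp hA hΛ (Q := fun _ : Unit => F)
    (fun _ => hFm) (fun _ => subset_rfl) Subsingleton.pairwise fun _ => hF
  rw [iUnion_const] at this
  have hF_pos : 0 < μ.real F := ENNReal.toReal_pos hF0 hb.measure_ne_top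
  have := mul_lt_mul_of_pos_right hΛ' hF_pos
  linarith

end IsNormalizedTestFunction

end MeasureTheory

theorem stopping_cubes_first_generation_packing_general (p A : ℝ)
    (hp : 1 < p) (hA : 0 < A) :
    ∃ c : ℝ, 0 ≤ c ∧ c < 1 ∧
    ∀ (n : ℕ) (μ : Measure (Fin n → ℝ)) (kF : ℤ) (cF : Fin n → ℤ)
      (b : (Fin n → ℝ) → ℝ) (S : Set (ℤ × (Fin n → ℤ))),
      μ (dyadicCube n kF cF) ≠ 0 → μ (dyadicCube n kF cF) ≠ ⊤ →
      IntegrableOn b (dyadicCube n kF cF) μ →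
      IntegrableOn (fun x => |b x| ^ p) (dyadicCube n kF cF) μ →
      (∀ x ∉ dyadicCube n kF cF, b x = 0) →
      ((μ (dyadicCube n kF cF)).toReal⁻¹ * ∫ x in dyadicCube n kF cF, b x ∂μ) = 1 →
      (∫ x in dyadicCube n kF cF, |b x| ^ p ∂μ) ≤ A * (μ (dyadicCube n kF cF)).toReal →
      (∀ q ∈ S, dyadicCube n q.1 q.2 ⊆ dyadicCube n kF cF ∧
        (|(μ (dyadicCube n q.1 q.2)).toReal⁻¹ * ∫ x in dyadicCube n q.1 q.2, b x ∂μ|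
            < 1 / 2 ∨
          (μ (dyadicCube n q.1 q.2)).toReal⁻¹ * ∫ x in dyadicCube n q.1 q.2, |b x| ^ p ∂μ
            > 2 ^ (p / (p - 1) + 1) * A ^ (p / (p - 1)))) →
      (∀ q ∈ S, ∀ (k' : ℤ) (c' : Fin n → ℤ),
        dyadicCube n q.1 q.2 ⊂ dyadicCube n k' c' →
        dyadicCube n k' c' ⊆ dyadicCube n kF cF →
        ¬ (|(μ (dyadicCube n k' c')).toReal⁻¹ * ∫ x in dyadicCube n k' c', b x ∂μ|
            < 1 / 2 ∨
          (μ (dyadicCube n k' c')).toReal⁻¹ * ∫ x in dyadicCube n k' c', |b x| ^ p ∂μ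
            > 2 ^ (p / (p - 1) + 1) * A ^ (p / (p - 1)))) →
      ∑' q : S, μ (dyadicCube n q.1.1 q.1.2) ≤
        ENNReal.ofReal c * μ (dyadicCube n kF cF) := by
  set Λ : ℝ := 2 ^ (p / (p - 1) + 1) * A ^ (p / (p - 1))
  have hΛ : Λ = 4 * A * (2 * A) ^ (p - 1)⁻¹ := Real.two_rpow_mul_rpow_conjExponent hp hA
  have hΛ0 : 0 < Λ := hΛ ▸ by positivity
  have hΛ' : A / Λ < (2 * (2 * A) ^ (p - 1)⁻¹)⁻¹ := by
    rw [hΛ]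
    field_simp
    linarith
  refine ⟨max 0 (1 - (2 * (2 * A) ^ (p - 1)⁻¹)⁻¹ + A / Λ), le_max_left _ _,
    max_lt one_pos (by linarith), ?_⟩
  intro n μ kF cF b S hF0 hFtop hb hbp _ hmean hbpF hstop hmax
  set F := dyadicCube n kF cF
  have hbF : IsNormalizedTestFunction μ p A b F :=
    ⟨hFtop, hb, hbp, by rwa [setAverage_eq, smul_eq_mul], hbpF⟩
  have hF := hbF.not_isStoppingSet hp hA hΛ0 hΛ' (measurableSet_dyadicCube n kF cF) hF0
  have hdisj : Pairwise (Disjoint on fun q : S => dyadicCube n q.1.1 q.1.2) := by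
    rcases eq_or_ne n 0 with rfl | hn
    · -- in `ℝ⁰` every dyadic cube is `F`, which does not stop, so `S` is empty
      intro q
      have hqF : dyadicCube 0 q.1.1 q.1.2 = F := by ext x; simp [F, dyadicCube]
      exact absurd (hqF ▸ isStoppingSet_iff.2 (hstop q q.2).2) hF
    · exact pairwise_disjoint_dyadicCube hn fun q hq q' hq' hss =>
        hmax q hq _ _ hss (hstop q' hq').1 (hstop q' hq').2
  calc ∑' q : S, μ (dyadicCube n q.1.1 q.1.2) = μ (⋃ q : S, dyadicCube n q.1.1 q.1.2) :=
        (measure_iUnion hdisj fun q => measurableSet_dyadicCube n _ _).symm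
    _ ≤ ENNReal.ofReal (1 - (2 * (2 * A) ^ (p - 1)⁻¹)⁻¹ + A / Λ) * μ F :=
        hbF.measure_iUnion_le_of_isStoppingSet hp hA hΛ0 (fun q => measurableSet_dyadicCube n _ _)
          (fun q => (hstop q q.2).1) hdisj fun q => isStoppingSet_iff.2 (hstop q q.2).2
    _ ≤ _ := by gcongr; exact le_max_right _ _

/-- Packing estimate for the first generation of stopping cubes: the maximal dyadic
subcubes `Q ⊆ F` with `|⟨b_F⟩_Q| < 1/2` or `⟨|b_F|^p⟩_Q > 2^{p'+1} A^{p'}` (where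
`⟨b_F⟩_F = 1`, `‖b_F‖_{L^p(μ)}^p ≤ A μ(F)`, `p' = p/(p-1)`) satisfy
`∑ μ(S) ≤ c μ(F)` with `c < 1` depending only on `p` and `A`. -/
theorem stopping_cubes_first_generation_packing (p A : ℝ)
    (hp : 1 < p) (hp2 : p ≤ 2) (hA : 0 < A) :
    ∃ c : ℝ, 0 ≤ c ∧ c < 1 ∧
    ∀ (n : ℕ) (μ : Measure (Fin n → ℝ)) (kF : ℤ) (cF : Fin n → ℤ)
      (b : (Fin n → ℝ) → ℝ) (S : Set (ℤ × (Fin n → ℤ))),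
      μ (dyadicCube n kF cF) ≠ 0 → μ (dyadicCube n kF cF) ≠ ⊤ →
      IntegrableOn b (dyadicCube n kF cF) μ →
      IntegrableOn (fun x => |b x| ^ p) (dyadicCube n kF cF) μ →
      (∀ x ∉ dyadicCube n kF cF, b x = 0) →
      ((μ (dyadicCube n kF cF)).toReal⁻¹ * ∫ x in dyadicCube n kF cF, b x ∂μ) = 1 →
      (∫ x in dyadicCube n kF cF, |b x| ^ p ∂μ) ≤ A * (μ (dyadicCube n kF cF)).toReal →
      (∀ q ∈ S, dyadicCube n q.1 q.2 ⊆ dyadicCube n kF cF ∧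
        (|(μ (dyadicCube n q.1 q.2)).toReal⁻¹ * ∫ x in dyadicCube n q.1 q.2, b x ∂μ|
            < 1 / 2 ∨
          (μ (dyadicCube n q.1 q.2)).toReal⁻¹ * ∫ x in dyadicCube n q.1 q.2, |b x| ^ p ∂μ
            > 2 ^ (p / (p - 1) + 1) * A ^ (p / (p - 1)))) →
      (∀ q ∈ S, ∀ (k' : ℤ) (c' : Fin n → ℤ),
        dyadicCube n q.1 q.2 ⊂ dyadicCube n k' c' →
        dyadicCube n k' c' ⊆ dyadicCube n kF cF →
        ¬ (|(μ (dyadicCube n k' c')).toReal⁻¹ * ∫ x in dyadicCube n k' c', b x ∂μ|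
            < 1 / 2 ∨
          (μ (dyadicCube n k' c')).toReal⁻¹ * ∫ x in dyadicCube n k' c', |b x| ^ p ∂μ
            > 2 ^ (p / (p - 1) + 1) * A ^ (p / (p - 1)))) →
      ∑' q : S, μ (dyadicCube n q.1.1 q.1.2) ≤
        ENNReal.ofReal c * μ (dyadicCube n kF cF) :=
  stopping_cubes_first_generation_packing_general p A hp hA
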